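/- For nonnegative integers p, q and u ∈ ℂ, the integral ∫_ℂ v̄^p v^q e^{u v̄ - |v|²} dV(v) equals 0 if p > q, and equals (q!/(q-p)!) · u^{q-p} if p ≤ q, where dV is Lebesgue measure on ℂ divided by π. -/

import Mathlib

/-!
Expand `exp (u * conj v) = ∑ (u * conj v) ^ n / n!` and integrate term by term; dominated
convergence applies with the integrable majorant `‖v‖ ^ (p + q) * exp (‖u‖ * ‖v‖ - ‖v‖ ^ 2)`.
In polar coordinates the Gaussian moment `∫ conj v ^ m * v ^ n * exp (-‖v‖ ^ 2)` splits into a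
Gamma integral in the radius and `∫ exp (i (n - m) θ) dθ` over a period, so it equals `π n!` if
`m = n` and vanishes otherwise. Hence only the term `n = q - p` survives.
-/

open MeasureTheory Complex Set Filter
open scoped Real Nat ComplexConjugate

section Gaussian

variable {V : Type*} [NormedAddCommGroup V] [InnerProductSpace ℝ V] [FiniteDimensional ℝ V]
  [MeasurableSpace V] [BorelSpace V]

lemma integrable_exp_neg_mul_sq_norm {b : ℝ} (hb : 0 < b) :
    Integrable (fun v : V => Real.exp (-b * ‖v‖ ^ 2)) := by
  have := (GaussianFourier.integrable_cexp_neg_mul_sq_norm_add (V := V) (b := b)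
    (by simpa using hb) 0 0).norm
  simpa [Complex.norm_exp, ← ofReal_pow] using this

-- `x ^ k ≤ k! * exp x` and completing the square reduce this to a Gaussian.
lemma integrable_pow_norm_mul_exp_mul_norm_sub_sq (k : ℕ) (a : ℝ) :
    Integrable (fun v : V => ‖v‖ ^ k * Real.exp (a * ‖v‖ - ‖v‖ ^ 2)) := by
  refine ((integrable_exp_neg_mul_sq_norm (V := V) (b := 1 / 2) (by norm_num)).const_mul
    (k ! * Real.exp ((a + 1) ^ 2 / 2))).mono' (by fun_prop) (Eventually.of_forall fun v => ?_)
  have hpow : ‖v‖ ^ k ≤ k ! * Real.exp ‖v‖ := by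
    have := Real.pow_div_factorial_le_exp _ (norm_nonneg v) k
    rwa [div_le_iff₀ (by positivity), mul_comm] at this
  rw [Real.norm_of_nonneg (by positivity)]
  calc ‖v‖ ^ k * Real.exp (a * ‖v‖ - ‖v‖ ^ 2)
      ≤ k ! * Real.exp ‖v‖ * Real.exp (a * ‖v‖ - ‖v‖ ^ 2) := by gcongr
    _ = k ! * Real.exp ((a + 1) * ‖v‖ - ‖v‖ ^ 2) := by
      rw [mul_assoc, ← Real.exp_add]; ring_nf
    _ ≤ k ! * Real.exp ((a + 1) ^ 2 / 2 + -(1 / 2) * ‖v‖ ^ 2) := by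
      gcongr; nlinarith [sq_nonneg (‖v‖ - (a + 1))]
    _ = k ! * Real.exp ((a + 1) ^ 2 / 2) * Real.exp (-(1 / 2) * ‖v‖ ^ 2) := by
      rw [Real.exp_add, mul_assoc]

end Gaussian

lemma integral_exp_int_mul_I_Ioo (k : ℤ) :
    ∫ θ in Ioo (-π) π, cexp (k * I * θ) = if k = 0 then 2 * (π : ℂ) else 0 := by
  split_ifs with hk
  · simp [hk, two_mul, Real.pi_pos.le]
  · have hc : (k : ℂ) * I ≠ 0 := mul_ne_zero (by exact_mod_cast hk) I_ne_zero
    rw [← integral_Ioc_eq_integral_Ioo,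
      ← intervalIntegral.integral_of_le (by linarith [Real.pi_pos]), integral_exp_mul_complex hc]
    have h1 : (k : ℂ) * I * π = k * (π * I) := by ring
    have h2 : (k : ℂ) * I * ((-π : ℝ) : ℂ) = k * -(π * I) := by push_cast; ring
    rw [h1, h2, exp_int_mul, exp_int_mul, exp_neg, exp_pi_mul_I]
    norm_num

lemma integral_pow_mul_exp_neg_sq_Ioi (n : ℕ) :
    ∫ r in Ioi (0 : ℝ), r ^ (2 * n + 1) * Real.exp (-r ^ 2) = n ! / 2 := by
  have h := _root_.integral_rpow_mul_exp_neg_rpow (p := 2) (q := (2 * n + 1 : ℕ)) (by norm_num)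
    (by linarith [(Nat.cast_nonneg (2 * n + 1) : (0 : ℝ) ≤ _)])
  rw [show (((2 * n + 1 : ℕ) : ℝ) + 1) / 2 = n + 1 by push_cast; ring,
    Real.Gamma_nat_eq_factorial] at h
  rw [div_eq_inv_mul, ← one_div, ← h]
  refine setIntegral_congr_fun measurableSet_Ioi fun r _ => ?_
  norm_cast

lemma conj_pow_mul_pow_polarCoord_symm (m n : ℕ) (p : ℝ × ℝ) :
    conj (Complex.polarCoord.symm p) ^ m * Complex.polarCoord.symm p ^ n =
      (p.1 : ℂ) ^ (m + n) * cexp (((n - m : ℤ) : ℂ) * I * p.2) := by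
  have hv : Complex.polarCoord.symm p = p.1 * cexp (p.2 * I) := by
    rw [Complex.polarCoord_symm_apply, exp_mul_I, ← ofReal_cos, ← ofReal_sin]
  rw [hv, map_mul, ← exp_conj, conj_ofReal, map_mul, conj_ofReal, conj_I, mul_pow, mul_pow,
    ← exp_nat_mul, ← exp_nat_mul, pow_add]
  have : cexp (m * (p.2 * -I)) * cexp (n * (p.2 * I)) = cexp (((n - m : ℤ) : ℂ) * I * p.2) := by
    rw [← exp_add]; push_cast; ring_nf
  rw [← this]; ring

theorem integral_conj_pow_mul_pow_mul_exp_neg_norm_sq (m n : ℕ) :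
    ∫ v : ℂ, conj v ^ m * v ^ n * cexp (-(‖v‖ ^ 2 : ℝ)) = if m = n then (π : ℂ) * n ! else 0 := by
  have hpolar : ∫ v : ℂ, conj v ^ m * v ^ n * cexp (-(‖v‖ ^ 2 : ℝ)) =
      (∫ r in Ioi (0 : ℝ), ((r ^ (m + n + 1) * Real.exp (-r ^ 2) : ℝ) : ℂ)) *
        ∫ θ in Ioo (-π) π, cexp (((n - m : ℤ) : ℂ) * I * θ) := by
    rw [← Complex.integral_comp_polarCoord_symm, polarCoord_target, ← setIntegral_prod_mul,
      Measure.volume_eq_prod]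
    refine setIntegral_congr_fun (measurableSet_Ioi.prod measurableSet_Ioo) fun p hp => ?_
    rw [conj_pow_mul_pow_polarCoord_symm, norm_polarCoord_symm, abs_of_pos hp.1, real_smul]
    push_cast
    ring
  rw [hpolar, integral_exp_int_mul_I_Ioo, integral_complex_ofReal]
  rcases eq_or_ne m n with rfl | hmn
  · rw [if_pos (by simp), if_pos rfl, show m + m + 1 = 2 * m + 1 by ring,
      integral_pow_mul_exp_neg_sq_Ioi]
    push_cast
    ring
  · rw [if_neg (by omega), if_neg hmn, mul_zero]

lemma hasSum_integral_exp_mul_conj (p q : ℕ) (u : ℂ) :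
    HasSum (fun n : ℕ => u ^ n / n ! * ∫ v : ℂ, conj v ^ (p + n) * v ^ q * cexp (-(‖v‖ ^ 2 : ℝ)))
      (∫ v : ℂ, conj v ^ p * v ^ q * cexp (u * conj v - (‖v‖ ^ 2 : ℝ))) := by
  set g : ℂ → ℂ := fun v => conj v ^ p * v ^ q * cexp (-(‖v‖ ^ 2 : ℝ)) with hg
  have hnorm_g (v : ℂ) : ‖g v‖ = ‖v‖ ^ (p + q) * Real.exp (-‖v‖ ^ 2) := by
    simp only [hg, norm_mul, norm_pow, RCLike.norm_conj, norm_exp, neg_re, ofReal_re, pow_add]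
  have hterm (n : ℕ) (v : ℂ) : u ^ n / n ! * (conj v ^ (p + n) * v ^ q * cexp (-(‖v‖ ^ 2 : ℝ)))
      = (u * conj v) ^ n / n ! * g v := by
    rw [hg]; ring
  have hf (v : ℂ) : conj v ^ p * v ^ q * cexp (u * conj v - (‖v‖ ^ 2 : ℝ))
      = cexp (u * conj v) * g v := by
    rw [hg, sub_eq_add_neg, exp_add]; ring
  simp_rw [← integral_const_mul, hterm, hf]
  have hexp (v : ℂ) : HasSum (fun n : ℕ => (‖u‖ * ‖v‖) ^ n / n ! * ‖g v‖)
      (Real.exp (‖u‖ * ‖v‖) * ‖g v‖) := by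
    rw [Real.exp_eq_exp_ℝ]
    exact (NormedSpace.expSeries_div_hasSum_exp (‖u‖ * ‖v‖)).mul_right ‖g v‖
  refine hasSum_integral_of_dominated_convergence (fun n v => (‖u‖ * ‖v‖) ^ n / n ! * ‖g v‖)
    (fun n => ?_) (fun n => Eventually.of_forall fun v => ?_)
    (Eventually.of_forall fun v => (hexp v).summable) ?_ (Eventually.of_forall fun v => ?_)
  · exact (by fun_prop : Continuous fun v => (u * conj v) ^ n / n ! * g v).aestronglyMeasurable
  · rw [norm_mul, norm_div, norm_pow, norm_mul, RCLike.norm_conj, norm_natCast]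
  · refine (integrable_pow_norm_mul_exp_mul_norm_sub_sq (V := ℂ) (p + q) ‖u‖).congr
      (Eventually.of_forall fun v => ?_)
    dsimp only
    rw [(hexp v).tsum_eq, hnorm_g, sub_eq_add_neg, Real.exp_add]
    ring
  · rw [exp_eq_exp_ℂ]
    exact (NormedSpace.expSeries_div_hasSum_exp (u * conj v)).mul_right (g v)

lemma hasSum_pow_div_factorial_mul_ite (p q : ℕ) (u c : ℂ) :
    HasSum (fun n : ℕ => u ^ n / n ! * if p + n = q then c * q ! else 0)
      (c * if p ≤ q then ((q ! / (q - p)! : ℕ) : ℂ) * u ^ (q - p) else 0) := by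
  rcases le_or_gt p q with hpq | hpq
  · have hsingle (n : ℕ) (hn : n ≠ q - p) :
        (u ^ n / n ! * if p + n = q then c * q ! else 0) = 0 := by
      rw [if_neg (by omega), mul_zero]
    convert hasSum_single (q - p) hsingle using 1
    rw [if_pos hpq, if_pos (by omega),
      Nat.cast_div_charZero (Nat.factorial_dvd_factorial (Nat.sub_le q p))]
    field_simp
  · convert hasSum_zero with n <;> rw [if_neg (by omega), mul_zero]

theorem stmt_8 (p q : ℕ) (u : ℂ) :
    ∫ v : ℂ,
        ((starRingEnd ℂ) v) ^ p * v ^ q *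
          Complex.exp (u * (starRingEnd ℂ) v - ((‖v‖ : ℝ) ^ 2 : ℝ))
      ∂((ENNReal.ofReal Real.pi)⁻¹ • (volume : Measure ℂ)) =
    if p ≤ q then ((q.factorial / (q - p).factorial : ℕ) : ℂ) * u ^ (q - p) else 0 := by
  have hsum := hasSum_integral_exp_mul_conj p q u
  simp_rw [integral_conj_pow_mul_pow_mul_exp_neg_norm_sq] at hsum
  rw [integral_smul_measure, hsum.unique (hasSum_pow_div_factorial_mul_ite p q u π),
    ENNReal.toReal_inv, ENNReal.toReal_ofReal Real.pi_pos.le, real_smul, ofReal_inv,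
    inv_mul_cancel_left₀ (ofReal_ne_zero.mpr Real.pi_ne_zero)]
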